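/- arXiv:2005.02045 — 4 statements merged into one kernel-verified Lean document; each statement's English description precedes it below -/
import Mathlib

section
/- Let X and Y be real Banach spaces. Then 𝒯^cc(X ⊕_1 Y) ≤ min{𝒯^cc(X), 𝒯^cc(Y)}, where X ⊕_1 Y is the ℓ_1-sum of X and Y. -/
open Metric Set

noncomputable section

variable (X : Type*) [NormedAddCommGroup X] [NormedSpace ℝ X]

/-- A subset `U` of `X` is weakly open if it is open in the weak topology of `X`. -/
def IsWeaklyOpen (U : Set X) : Prop := IsOpen (toWeakSpace ℝ X '' U)

/-- The slice `S(B_X, f, α) = {x ∈ B_X : f x > 1 - α}` of the closed unit ball of `X`. -/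
def sliceSet (f : X →L[ℝ] ℝ) (α : ℝ) : Set X :=
  {y ∈ closedBall (0 : X) 1 | 1 - α < f y}

/-- `S` is a slice of the closed unit ball of `X`, i.e. `S = S(B_X, f, α)` for some norm-one
functional `f` and some `α > 0`. -/
def IsSlice (S : Set X) : Prop :=
  ∃ f : X →L[ℝ] ℝ, ‖f‖ = 1 ∧ ∃ α > (0 : ℝ), S = sliceSet X f α

/-- The Daugavet index of thickness `𝒯ˢ(X)`: the infimum of all `r > 0` such that some slice of
the closed unit ball is contained in a closed ball of radius `r` centered at a point of the unit
sphere. -/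
def Ts : ℝ :=
  sInf {r : ℝ | 0 < r ∧ ∃ x : X, ‖x‖ = 1 ∧ ∃ S : Set X, IsSlice X S ∧ S ⊆ closedBall x r}

/-- `W` is a nonempty relatively weakly open subset of the closed unit ball of `X`. -/
def IsRelWeakOpen (W : Set X) : Prop :=
  W.Nonempty ∧ ∃ U : Set X, IsWeaklyOpen X U ∧ W = closedBall (0 : X) 1 ∩ U

/-- The Daugavet index of thickness `𝒯(X)`: the infimum of all `r > 0` such that some nonempty
relatively weakly open subset of the closed unit ball is contained in a closed ball of radius `r`
centered at a point of the unit sphere. -/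
def Tw : ℝ :=
  sInf {r : ℝ | 0 < r ∧ ∃ x : X, ‖x‖ = 1 ∧ ∃ W : Set X, IsRelWeakOpen X W ∧
    W ⊆ closedBall x r}

/-- The convex combination `∑ i, l i • W i` of the sets `W i` (the set of all sums
`∑ i, l i • w i` with `w i ∈ W i`). -/
def comboSet {n : ℕ} (l : Fin n → ℝ) (W : Fin n → Set X) : Set X :=
  {z : X | ∃ w : Fin n → X, (∀ i, w i ∈ W i) ∧ z = ∑ i, l i • w i}

/-- The Daugavet index of thickness `𝒯ᶜᶜ(X)`: the infimum of all `r > 0` such that some convex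
combination of nonempty relatively weakly open subsets of the closed unit ball is contained in a
closed ball of radius `r` centered at a point of the unit sphere. -/
def Tcc : ℝ :=
  sInf {r : ℝ | 0 < r ∧ ∃ x : X, ‖x‖ = 1 ∧ ∃ (n : ℕ) (l : Fin n → ℝ) (W : Fin n → Set X),
    (∀ i, 0 ≤ l i) ∧ (∑ i, l i) = 1 ∧ (∀ i, IsRelWeakOpen X (W i)) ∧
    comboSet X l W ⊆ closedBall x r}

/-- `X` has the Daugavet property: for every `x` in the unit sphere, every `ε > 0` and every
slice `S` of the closed unit ball there exists `y ∈ S` with `‖x - y‖ ≥ 2 - ε`. -/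
def DaugavetProperty : Prop :=
  ∀ x : X, ‖x‖ = 1 → ∀ ε > (0 : ℝ), ∀ S : Set X, IsSlice X S → ∃ y ∈ S, 2 - ε ≤ ‖x - y‖

/-!
`E` is an L-summand of `G = E ⊕₁ F`. Take a convex combination `∑ λᵢ Wᵢ` of relatively weakly
open subsets of `B_E` lying in `B(x, r)`. When `E` is infinite-dimensional, every nonempty
relatively weakly open subset of `B_E` meets the unit sphere (it contains a line through each of
its points), so each `Wᵢ` can be shrunk by a slice into the shell `‖y‖ > 1 - δ`. Pulling the
shrunken sets back along the projection `G → E` gives relatively weakly open subsets of `B_G`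
whose `F`-components have norm `< δ`, and their combination lies in `B((x, 0), r + δ)`. When `E`
is finite-dimensional, norm-open sets are weakly open and the same construction applied to
`B_E ∩ B(x, ε)` shows `𝒯ᶜᶜ(G) = 0`.
-/

section WeakTopology

variable {E F : Type*} [NormedAddCommGroup E] [NormedSpace ℝ E]
  [NormedAddCommGroup F] [NormedSpace ℝ F]

lemma isWeaklyOpen_iff {U : Set E} :
    IsWeaklyOpen E U ↔ IsOpen ((toWeakSpace ℝ E).symm ⁻¹' U) := by
  rw [IsWeaklyOpen, LinearEquiv.image_eq_preimage_symm]

lemma isWeaklyOpen_univ : IsWeaklyOpen E univ := by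
  simp [isWeaklyOpen_iff]

lemma IsWeaklyOpen.inter {U V : Set E} (hU : IsWeaklyOpen E U) (hV : IsWeaklyOpen E V) :
    IsWeaklyOpen E (U ∩ V) := by
  rw [isWeaklyOpen_iff] at *
  exact hU.inter hV

lemma IsWeaklyOpen.preimage (p : F →L[ℝ] E) {U : Set E} (hU : IsWeaklyOpen E U) :
    IsWeaklyOpen F (p ⁻¹' U) := by
  rw [isWeaklyOpen_iff] at *
  exact hU.preimage (WeakSpace.map p).continuous

lemma IsOpen.isWeaklyOpen [FiniteDimensional ℝ E] {U : Set E} (hU : IsOpen U) :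
    IsWeaklyOpen E U := by
  have : FiniteDimensional ℝ (WeakSpace ℝ E) := (toWeakSpace ℝ E).finiteDimensional
  rw [isWeaklyOpen_iff]
  exact hU.preimage (LinearMap.continuous_of_finiteDimensional _)

lemma IsWeaklyOpen.exists_finset_forall_eq_imp_mem {U : Set E} (hU : IsWeaklyOpen E U) {w : E}
    (hw : w ∈ U) : ∃ I : Finset (E →L[ℝ] ℝ), ∀ z, (∀ f ∈ I, f z = f w) → z ∈ U := by
  obtain ⟨t, ht, htU⟩ := isOpen_induced_iff.mp hU
  have hwt : toWeakSpace ℝ E w ∈ _ ⁻¹' t := htU ▸ mem_image_of_mem _ hw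
  obtain ⟨I, u, hu, hIu⟩ := isOpen_pi_iff.mp ht _ hwt
  refine ⟨I, fun z hz => ?_⟩
  have hzt : toWeakSpace ℝ E z ∈ toWeakSpace ℝ E '' U := by
    rw [← htU]
    refine hIu fun f hf => ?_
    change f z ∈ u f
    exact (hz f hf).symm ▸ (hu f hf).2
  simpa using hzt

lemma IsWeaklyOpen.exists_ne_zero_forall_add_smul_mem (hinf : ¬ FiniteDimensional ℝ E)
    {U : Set E} (hU : IsWeaklyOpen E U) {w : E} (hw : w ∈ U) :
    ∃ e ≠ 0, ∀ t : ℝ, w + t • e ∈ U := by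
  obtain ⟨I, hI⟩ := hU.exists_finset_forall_eq_imp_mem hw
  let φ : E →ₗ[ℝ] I → ℝ := LinearMap.pi fun f : I => ((f : E →L[ℝ] ℝ) : E →ₗ[ℝ] ℝ)
  have hker : LinearMap.ker φ ≠ ⊥ := fun h =>
    hinf (FiniteDimensional.of_injective φ (LinearMap.ker_eq_bot.mp h))
  obtain ⟨e, he, he0⟩ := Submodule.exists_mem_ne_zero_of_ne_bot hker
  refine ⟨e, he0, fun t => hI _ fun f hf => ?_⟩
  have hfe : f e = 0 := congrFun (LinearMap.mem_ker.mp he) ⟨f, hf⟩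
  simp [hfe]

end WeakTopology

section Thickness

variable {E F G : Type*} [NormedAddCommGroup E] [NormedSpace ℝ E]
  [NormedAddCommGroup F] [NormedSpace ℝ F] [NormedAddCommGroup G] [NormedSpace ℝ G]

lemma exists_norm_add_smul_eq_one {w e : E} (hw : ‖w‖ ≤ 1) (he : e ≠ 0) :
    ∃ t : ℝ, ‖w + t • e‖ = 1 := by
  have he' : 0 < ‖e‖ := norm_pos_iff.mpr he
  set T := 2 / ‖e‖
  have hT : 1 ≤ ‖w + T • e‖ := by
    have hTe : ‖T • e‖ = 2 := by
      rw [norm_smul, Real.norm_of_nonneg (by positivity), div_mul_cancel₀ _ he'.ne']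
    have := norm_sub_norm_le (T • e) (-w)
    rw [sub_neg_eq_add, add_comm, norm_neg] at this
    linarith
  have hcont : Continuous fun t : ℝ => ‖w + t • e‖ := by fun_prop
  obtain ⟨t, -, ht⟩ := intermediate_value_Icc (by positivity : (0 : ℝ) ≤ T) hcont.continuousOn
    (show (1 : ℝ) ∈ Icc ‖w + (0 : ℝ) • e‖ ‖w + T • e‖ by simpa using ⟨hw, hT⟩)
  exact ⟨t, ht⟩

lemma IsRelWeakOpen.exists_norm_eq_one (hinf : ¬ FiniteDimensional ℝ E) {W : Set E}
    (hW : IsRelWeakOpen E W) : ∃ w ∈ W, ‖w‖ = 1 := by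
  obtain ⟨⟨w, hw⟩, U, hU, rfl⟩ := hW
  obtain ⟨e, he, hline⟩ := hU.exists_ne_zero_forall_add_smul_mem hinf hw.2
  obtain ⟨t, ht⟩ := exists_norm_add_smul_eq_one (mem_closedBall_zero_iff.mp hw.1) he
  exact ⟨w + t • e, ⟨mem_closedBall_zero_iff.mpr ht.le, hline t⟩, ht⟩

lemma IsRelWeakOpen.exists_subset_forall_norm_gt {W : Set E} (hW : IsRelWeakOpen E W)
    (hW1 : ∃ w ∈ W, ‖w‖ = 1) {δ : ℝ} (hδ : 0 < δ) :
    ∃ W' ⊆ W, IsRelWeakOpen E W' ∧ ∀ y ∈ W', 1 - δ < ‖y‖ := by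
  obtain ⟨w, hw, hw1⟩ := hW1
  obtain ⟨f, hf1, hfw⟩ := exists_dual_vector ℝ w (by simp [hw1])
  obtain ⟨-, U, hU, rfl⟩ := hW
  refine ⟨closedBall 0 1 ∩ (U ∩ f ⁻¹' Ioi (1 - δ)), by gcongr; exact inter_subset_left,
    ⟨⟨w, hw.1, hw.2, ?_⟩, _, hU.inter (isOpen_Ioi.isWeaklyOpen.preimage f), rfl⟩,
    fun y hy => ?_⟩
  · simp [hfw, hw1, hδ]
  · calc 1 - δ < f y := hy.2.2
      _ ≤ ‖f‖ * ‖y‖ := (le_abs_self _).trans (f.le_opNorm y)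
      _ = ‖y‖ := by rw [hf1, one_mul]

lemma comboSet_mono {n : ℕ} (l : Fin n → ℝ) {W W' : Fin n → Set E} (h : ∀ i, W i ⊆ W' i) :
    comboSet E l W ⊆ comboSet E l W' := by
  rintro _ ⟨w, hw, rfl⟩
  exact ⟨w, fun i => h i (hw i), rfl⟩

lemma comboSet_const_one (S : Set E) : comboSet E (fun _ : Fin 1 => 1) (fun _ => S) = S := by
  ext z
  simp only [comboSet, Finset.univ_unique, Finset.sum_singleton, one_smul, mem_ofPred_eq]
  exact ⟨fun ⟨w, hw, hz⟩ => hz ▸ hw 0, fun hz => ⟨fun _ => z, fun _ => hz, rfl⟩⟩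

def tccSet (E : Type*) [NormedAddCommGroup E] [NormedSpace ℝ E] : Set ℝ :=
  {r : ℝ | 0 < r ∧ ∃ x : E, ‖x‖ = 1 ∧ ∃ (n : ℕ) (l : Fin n → ℝ) (W : Fin n → Set E),
    (∀ i, 0 ≤ l i) ∧ (∑ i, l i) = 1 ∧ (∀ i, IsRelWeakOpen E (W i)) ∧
    comboSet E l W ⊆ closedBall x r}

lemma tcc_eq_sInf_tccSet : Tcc E = sInf (tccSet E) := rfl

lemma two_mem_tccSet [Nontrivial E] : (2 : ℝ) ∈ tccSet E := by
  obtain ⟨x, hx⟩ := exists_norm_eq E zero_le_one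
  refine ⟨two_pos, x, hx, 1, fun _ => 1, fun _ => closedBall 0 1, fun _ => zero_le_one,
    by simp, fun _ => ⟨⟨0, by simp⟩, univ, isWeaklyOpen_univ, by simp⟩, ?_⟩
  rw [comboSet_const_one]
  intro z hz
  rw [mem_closedBall_zero_iff] at hz
  calc dist z x ≤ ‖z‖ + ‖x‖ := dist_le_norm_add_norm z x
    _ ≤ 2 := by linarith

structure IsLSummand (p : G →L[ℝ] E) (q : G →ₗ[ℝ] F) (j : E → G) : Prop where
  norm_eq : ∀ z, ‖z‖ = ‖p z‖ + ‖q z‖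
  p_apply_j : ∀ x, p (j x) = x
  q_apply_j : ∀ x, q (j x) = 0

namespace IsLSummand

variable {p : G →L[ℝ] E} {q : G →ₗ[ℝ] F} {j : E → G}

lemma norm_sub_j (h : IsLSummand p q j) (z : G) (x : E) : ‖z - j x‖ = ‖p z - x‖ + ‖q z‖ := by
  rw [h.norm_eq, map_sub, map_sub, h.p_apply_j, h.q_apply_j, sub_zero]

lemma norm_j (h : IsLSummand p q j) (x : E) : ‖j x‖ = ‖x‖ := by
  rw [h.norm_eq, h.p_apply_j, h.q_apply_j, norm_zero, add_zero]

lemma add_mem_tccSet (h : IsLSummand p q j) {x : E} (hx : ‖x‖ = 1) {r δ : ℝ} (hr : 0 < r)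
    (hδ : 0 < δ) {n : ℕ} {l : Fin n → ℝ} {W : Fin n → Set E} (hl0 : ∀ i, 0 ≤ l i)
    (hl1 : ∑ i, l i = 1) (hW : ∀ i, IsRelWeakOpen E (W i)) (hWδ : ∀ i, ∀ y ∈ W i, 1 - δ < ‖y‖)
    (hsub : comboSet E l W ⊆ closedBall x r) : r + δ ∈ tccSet G := by
  choose U hU hWU using fun i => (hW i).2
  refine ⟨by positivity, j x, by rw [h.norm_j, hx], n, l, fun i => closedBall 0 1 ∩ p ⁻¹' U i,
    hl0, hl1, fun i => ?_, ?_⟩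
  · obtain ⟨w, hw⟩ := (hW i).1
    rw [hWU i] at hw
    refine ⟨⟨j w, ?_, ?_⟩, _, (hU i).preimage p, rfl⟩
    · simpa [h.norm_j] using hw.1
    · simpa [mem_preimage, h.p_apply_j] using hw.2
  rintro _ ⟨v, hv, rfl⟩
  have hpv : ∀ i, p (v i) ∈ W i := fun i => by
    rw [hWU i]
    refine ⟨?_, (hv i).2⟩
    have := h.norm_eq (v i)
    have := mem_closedBall_zero_iff.mp (hv i).1
    rw [mem_closedBall_zero_iff]
    linarith [norm_nonneg (q (v i))]
  have hqv : ∀ i, q (v i) ∈ closedBall 0 δ := fun i => by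
    have := h.norm_eq (v i)
    have := mem_closedBall_zero_iff.mp (hv i).1
    have := hWδ i _ (hpv i)
    rw [mem_closedBall_zero_iff]
    linarith
  have hp : ‖p (∑ i, l i • v i) - x‖ ≤ r := by
    rw [← dist_eq_norm]
    exact hsub ⟨fun i => p (v i), hpv, by simp⟩
  have hq : ‖q (∑ i, l i • v i)‖ ≤ δ := by
    rw [← mem_closedBall_zero_iff, map_sum]
    simp only [map_smul]
    exact (convex_closedBall 0 δ).sum_mem (fun i _ => hl0 i) hl1 fun i _ => hqv i
  rw [mem_closedBall, dist_eq_norm, h.norm_sub_j]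
  linarith

lemma mem_tccSet_of_finiteDimensional [FiniteDimensional ℝ E] [Nontrivial E]
    (h : IsLSummand p q j) {ε : ℝ} (hε : 0 < ε) : ε ∈ tccSet G := by
  obtain ⟨x, hx⟩ := exists_norm_eq E zero_le_one
  have hε2 : 0 < ε / 2 := by positivity
  set W := closedBall 0 1 ∩ ball x (ε / 2)
  have hW : IsRelWeakOpen E W :=
    ⟨⟨x, by simp [hx], by simp [hε2]⟩, _, isOpen_ball.isWeaklyOpen, rfl⟩
  have hshell : ∀ y ∈ W, 1 - ε / 2 < ‖y‖ := fun y hy => by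
    have := norm_sub_norm_le x y
    rw [← dist_eq_norm, dist_comm, hx] at this
    linarith [mem_ball.mp hy.2]
  have hsub : comboSet E (fun _ : Fin 1 => 1) (fun _ => W) ⊆ closedBall x (ε / 2) := by
    rw [comboSet_const_one]
    exact inter_subset_right.trans ball_subset_closedBall
  simpa using h.add_mem_tccSet hx hε2 hε2 (fun _ => zero_le_one) (by simp) (fun _ => hW)
    (fun _ => hshell) hsub

lemma add_mem_tccSet_of_not_finiteDimensional (h : IsLSummand p q j)
    (hinf : ¬ FiniteDimensional ℝ E) {r : ℝ} (hr : r ∈ tccSet E) {δ : ℝ} (hδ : 0 < δ) :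
    r + δ ∈ tccSet G := by
  obtain ⟨hr0, x, hx, n, l, W, hl0, hl1, hW, hsub⟩ := hr
  choose W' hW'W hW' hW'δ using fun i =>
    (hW i).exists_subset_forall_norm_gt ((hW i).exists_norm_eq_one hinf) hδ
  exact h.add_mem_tccSet hx hr0 hδ hl0 hl1 hW' hW'δ ((comboSet_mono l hW'W).trans hsub)

lemma tcc_le [Nontrivial E] (h : IsLSummand p q j) : Tcc G ≤ Tcc E := by
  rw [tcc_eq_sInf_tccSet, tcc_eq_sInf_tccSet]
  refine le_csInf ⟨2, two_mem_tccSet⟩ fun r hr => le_of_forall_pos_le_add fun δ hδ => ?_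
  refine csInf_le ⟨0, fun _ hs => hs.1.le⟩ ?_
  by_cases hfin : FiniteDimensional ℝ E
  · exact h.mem_tccSet_of_finiteDimensional (add_pos hr.1 hδ)
  · exact h.add_mem_tccSet_of_not_finiteDimensional hfin hr hδ

end IsLSummand

lemma WithLp.isLSummand_fst :
    IsLSummand (WithLp.fstL 1 ℝ E F) (WithLp.sndₗ 1 ℝ E F) (fun x => WithLp.toLp 1 (x, 0)) :=
  ⟨WithLp.prod_norm_eq_of_L1, fun _ => rfl, fun _ => rfl⟩

lemma WithLp.isLSummand_snd :
    IsLSummand (WithLp.sndL 1 ℝ E F) (WithLp.fstₗ 1 ℝ E F) (fun y => WithLp.toLp 1 (0, y)) :=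
  ⟨fun z => (WithLp.prod_norm_eq_of_L1 z).trans (add_comm _ _), fun _ => rfl, fun _ => rfl⟩

end Thickness

theorem stmt_14_general (X Y : Type*) [NormedAddCommGroup X] [NormedSpace ℝ X]
    [Nontrivial X] [NormedAddCommGroup Y] [NormedSpace ℝ Y]
    [Nontrivial Y] :
    Tcc (WithLp 1 (X × Y)) ≤ min (Tcc X) (Tcc Y) :=
  le_min WithLp.isLSummand_fst.tcc_le WithLp.isLSummand_snd.tcc_le

theorem stmt_14 (X Y : Type*) [NormedAddCommGroup X] [NormedSpace ℝ X]
    [CompleteSpace X] [Nontrivial X] [NormedAddCommGroup Y] [NormedSpace ℝ Y]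
    [CompleteSpace Y] [Nontrivial Y] :
    Tcc (WithLp 1 (X × Y)) ≤ min (Tcc X) (Tcc Y) :=
  stmt_14_general X Y
end
end

section
/- Let X be a real Banach space and r ∈ [0,2]. Suppose that for every δ > 0 there exist a real Banach space Y and a continuous linear bijection L : X → Y with continuous inverse such that ‖L‖·‖L^{-1}‖ < 1 + δ and 𝒯^s(Y) = r. Then 𝒯^s(X) ≥ r. -/
open Metric Set

noncomputable section

variable (X : Type*) [NormedAddCommGroup X] [NormedSpace ℝ X]

universe u

/-!
If `L : X ≃L[ℝ] Y` and a slice `S(B_X, f, α)` lies in `closedBall x s` with `‖x‖ = 1`, then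
`{y ∈ B_Y | ‖L⁻¹‖ (1 - α) < f (L⁻¹ y)}` is a slice of `B_Y` as soon as `(1 - α) ‖L‖ ‖L⁻¹‖ < 1`
(because `‖f ∘ L⁻¹‖ ≥ 1 / ‖L‖`), and `‖L⁻¹‖⁻¹ • L⁻¹` maps it into `S(B_X, f, α)`. Hence it lies in
the ball of radius `‖L‖ ‖L⁻¹‖ s` about `‖L⁻¹‖ • L x`, a vector of norm between `1` and
`‖L‖ ‖L⁻¹‖`; recentring at a unit vector gives `𝒯ˢ(Y) ≤ K s + (K - 1)` for `K = ‖L‖ ‖L⁻¹‖`.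
With `K < 1 + δ` and `δ → 0` this gives `r ≤ s` for every admissible radius `s` of `X`.
-/

section

variable {X} {Y : Type*} [NormedAddCommGroup Y] [NormedSpace ℝ Y]

theorem Ts_le_of_isSlice_subset {s : ℝ} (hs : 0 < s) {x : X} (hx : ‖x‖ = 1) {S : Set X}
    (hS : IsSlice X S) (hsub : S ⊆ closedBall x s) : Ts X ≤ s :=
  csInf_le ⟨0, fun _ ht ↦ ht.1.le⟩ ⟨hs, x, hx, S, hS, hsub⟩

theorem le_Ts_of_forall [Nontrivial X] {r : ℝ}
    (h : ∀ s > (0 : ℝ), ∀ x : X, ‖x‖ = 1 → ∀ S, IsSlice X S → S ⊆ closedBall x s → r ≤ s) :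
    r ≤ Ts X := by
  obtain ⟨x, hx⟩ := exists_norm_eq X zero_le_one
  obtain ⟨f, hf, -⟩ := exists_dual_vector' ℝ x
  refine le_csInf ⟨2, two_pos, x, hx, sliceSet X f 1, ⟨f, hf, 1, one_pos, rfl⟩, ?_⟩ ?_
  · intro y hy
    rw [mem_closedBall, dist_eq_norm]
    have hy1 : ‖y‖ ≤ 1 := mem_closedBall_zero_iff.mp hy.1
    linarith [norm_sub_le y x]
  · rintro s ⟨hs, x, hx, S, hS, hsub⟩
    exact h s hs x hx S hS hsub

theorem isSlice_of_lt_norm {h : X →L[ℝ] ℝ} (hh : h ≠ 0) {c : ℝ} (hc : c < ‖h‖) :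
    IsSlice X {y ∈ closedBall (0 : X) 1 | c < h y} := by
  have hpos : 0 < ‖h‖ := norm_pos_iff.mpr hh
  refine ⟨‖h‖⁻¹ • h, ?_, 1 - c / ‖h‖, sub_pos.mpr ((div_lt_one hpos).mpr hc), ?_⟩
  · rw [norm_smul, norm_inv, norm_norm, inv_mul_cancel₀ hpos.ne']
  · ext y
    refine and_congr_right fun _ ↦ ?_
    rw [sub_sub_cancel, smul_apply, smul_eq_mul, inv_mul_eq_div,
      div_lt_div_iff_of_pos_right hpos]

theorem norm_sub_inv_norm_smul_self {z : X} (hz : 1 ≤ ‖z‖) : ‖z - ‖z‖⁻¹ • z‖ = ‖z‖ - 1 := by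
  have hz0 : 0 < ‖z‖ := one_pos.trans_le hz
  nth_rw 1 [← one_smul ℝ z]
  rw [← sub_smul, norm_smul, Real.norm_eq_abs,
    abs_of_nonneg (sub_nonneg.mpr (inv_le_one_of_one_le₀ hz)), sub_mul, one_mul,
    inv_mul_cancel₀ hz0.ne']

theorem Ts_le_of_isSlice_subset_of_one_le_norm {ρ : ℝ} (hρ : 0 < ρ) {z : X} (hz : 1 ≤ ‖z‖)
    {S : Set X} (hS : IsSlice X S) (hsub : S ⊆ closedBall z ρ) : Ts X ≤ ρ + (‖z‖ - 1) := by
  have hz0 : z ≠ 0 := norm_pos_iff.mp (one_pos.trans_le hz)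
  refine Ts_le_of_isSlice_subset (x := ‖z‖⁻¹ • z) (by linarith) (norm_smul_inv_norm hz0) hS
    (hsub.trans (closedBall_subset_closedBall' ?_))
  rw [dist_eq_norm, norm_sub_inv_norm_smul_self hz]

theorem superlevel_subset_closedBall_of_sliceSet_subset (L : X ≃L[ℝ] Y)
    (hB : 0 < ‖(L.symm : Y →L[ℝ] X)‖) {f : X →L[ℝ] ℝ} {α s : ℝ} {x : X}
    (hsub : sliceSet X f α ⊆ closedBall x s) :
    {y ∈ closedBall (0 : Y) 1 | ‖(L.symm : Y →L[ℝ] X)‖ * (1 - α) < f (L.symm y)} ⊆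
      closedBall (‖(L.symm : Y →L[ℝ] X)‖ • L x)
        (‖(L : X →L[ℝ] Y)‖ * ‖(L.symm : Y →L[ℝ] X)‖ * s) := by
  set A := ‖(L : X →L[ℝ] Y)‖
  set B := ‖(L.symm : Y →L[ℝ] X)‖
  rintro y ⟨hy, hfy⟩
  set u : X := B⁻¹ • L.symm y
  have hu : u ∈ sliceSet X f α := by
    refine ⟨mem_closedBall_zero_iff.mpr ?_, ?_⟩
    · rw [norm_smul, Real.norm_of_nonneg (inv_nonneg.mpr hB.le), inv_mul_le_iff₀ hB]
      calc ‖L.symm y‖ ≤ B * ‖y‖ := (L.symm : Y →L[ℝ] X).le_opNorm y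
        _ ≤ B * 1 := by gcongr; exact mem_closedBall_zero_iff.mp hy
    · simpa [u, lt_inv_mul_iff₀ hB] using hfy
  have hux : ‖u - x‖ ≤ s := by simpa [dist_eq_norm] using hsub hu
  have hyu : y - B • L x = B • L (u - x) := by
    simp [u, smul_sub, smul_smul, mul_inv_cancel₀ hB.ne']
  rw [mem_closedBall, dist_eq_norm, hyu, norm_smul, Real.norm_of_nonneg hB.le]
  calc B * ‖L (u - x)‖ ≤ B * (A * s) := by
        gcongr; exact ((L : X →L[ℝ] Y).le_opNorm _).trans (by gcongr)
    _ = A * B * s := by ring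

theorem Ts_le_of_continuousLinearEquiv (L : X ≃L[ℝ] Y) {f : X →L[ℝ] ℝ} (hf : ‖f‖ = 1)
    {α s : ℝ} (hs : 0 < s) (hα : (1 - α) * (‖(L : X →L[ℝ] Y)‖ * ‖(L.symm : Y →L[ℝ] X)‖) < 1)
    {x : X} (hx : ‖x‖ = 1) (hsub : sliceSet X f α ⊆ closedBall x s) :
    Ts Y ≤ ‖(L : X →L[ℝ] Y)‖ * ‖(L.symm : Y →L[ℝ] X)‖ * s +
      (‖(L : X →L[ℝ] Y)‖ * ‖(L.symm : Y →L[ℝ] X)‖ - 1) := by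
  set A := ‖(L : X →L[ℝ] Y)‖
  set B := ‖(L.symm : Y →L[ℝ] X)‖
  have hBLx : 1 ≤ B * ‖L x‖ := by simpa [hx] using (L.symm : Y →L[ℝ] X).le_opNorm (L x)
  have hLx : ‖L x‖ ≤ A := by simpa [hx] using (L : X →L[ℝ] Y).le_opNorm x
  have hB : 0 < B := pos_of_mul_pos_left (one_pos.trans_le hBLx) (norm_nonneg _)
  set h : Y →L[ℝ] ℝ := f.comp (L.symm : Y →L[ℝ] X)
  have hfh : f = h.comp (L : X →L[ℝ] Y) := by ext v; simp [h]
  have hAh : 1 ≤ ‖h‖ * A := hf ▸ hfh ▸ h.opNorm_comp_le _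
  have hA : 0 < A := pos_of_mul_pos_right (one_pos.trans_le hAh) (norm_nonneg _)
  have hh0 : h ≠ 0 := norm_pos_iff.mp (pos_of_mul_pos_left (one_pos.trans_le hAh) hA.le)
  have hc : B * (1 - α) < ‖h‖ := by nlinarith
  have hz : ‖B • L x‖ = B * ‖L x‖ := by rw [norm_smul, Real.norm_of_nonneg hB.le]
  calc Ts Y ≤ A * B * s + (‖B • L x‖ - 1) :=
        Ts_le_of_isSlice_subset_of_one_le_norm (by positivity) (hz ▸ hBLx)
          (isSlice_of_lt_norm hh0 hc) (superlevel_subset_closedBall_of_sliceSet_subset L hB hsub)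
    _ ≤ A * B * s + (A * B - 1) := by rw [hz]; nlinarith

end

theorem stmt_17_general (X : Type*) [NormedAddCommGroup X] [NormedSpace ℝ X]
    [Nontrivial X] (r : ℝ)
    (h : ∀ δ > (0 : ℝ), ∃ (Y : Type u) (_ : NormedAddCommGroup Y) (_ : NormedSpace ℝ Y)
      (_ : CompleteSpace Y) (L : X ≃L[ℝ] Y),
        ‖(L : X →L[ℝ] Y)‖ * ‖(L.symm : Y →L[ℝ] X)‖ < 1 + δ ∧ Ts Y = r) :
    r ≤ Ts X := by
  refine le_Ts_of_forall fun s hs x hx S ⟨f, hf, α, hα, hS⟩ hsub ↦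
    le_of_forall_pos_le_add fun ε hε ↦ ?_
  subst hS
  set δ := min α (ε / (s + 1))
  have hδ : 0 < δ := lt_min hα (by positivity)
  have hδα : δ ≤ α := min_le_left _ _
  have hδε : δ * (s + 1) ≤ ε := (le_div_iff₀ (by positivity)).mp (min_le_right _ _)
  obtain ⟨Y, _, _, _, L, hL, rfl⟩ := h δ hδ
  set K := ‖(L : X →L[ℝ] Y)‖ * ‖(L.symm : Y →L[ℝ] X)‖
  have hK : 0 ≤ K := by positivity
  have hαK : (1 - α) * K < 1 := by
    rcases le_or_gt 1 α with hα1 | hα1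
    · nlinarith
    · calc (1 - α) * K ≤ (1 - δ) * (1 + δ) := by gcongr; linarith
        _ < 1 := by nlinarith
  calc Ts Y ≤ K * s + (K - 1) := Ts_le_of_continuousLinearEquiv L hf hs hαK hx hsub
    _ ≤ (1 + δ) * s + δ := by nlinarith
    _ ≤ s + ε := by linarith

theorem stmt_17 (X : Type*) [NormedAddCommGroup X] [NormedSpace ℝ X] [CompleteSpace X]
    [Nontrivial X] (r : ℝ) (hr₀ : 0 ≤ r) (hr₂ : r ≤ 2)
    (h : ∀ δ > (0 : ℝ), ∃ (Y : Type u) (_ : NormedAddCommGroup Y) (_ : NormedSpace ℝ Y)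
      (_ : CompleteSpace Y) (L : X ≃L[ℝ] Y),
        ‖(L : X →L[ℝ] Y)‖ * ‖(L.symm : Y →L[ℝ] X)‖ < 1 + δ ∧ Ts Y = r) :
    r ≤ Ts X :=
  stmt_17_general X r h
end
end

section
/- Let X be a real Banach space. Suppose that for every δ > 0 there exist a real Banach space Y and a continuous linear bijection L : X → Y with continuous inverse such that ‖L‖·‖L^{-1}‖ < 1 + δ and Y has the Daugavet property. Then X has the Daugavet property. -/
open Metric Set

noncomputable section

variable (X : Type*) [NormedAddCommGroup X] [NormedSpace ℝ X]

universe u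

set_option maxHeartbeats 1600000 in
theorem key_18 {Z : Type*} [NormedAddCommGroup Z] [NormedSpace ℝ Z]
    (h : ∀ δ > (0 : ℝ), ∃ (Y : Type u) (_ : NormedAddCommGroup Y) (_ : NormedSpace ℝ Y)
      (_ : CompleteSpace Y) (L : Z ≃L[ℝ] Y),
        ‖(L : Z →L[ℝ] Y)‖ * ‖(L.symm : Y →L[ℝ] Z)‖ < 1 + δ ∧ DaugavetProperty Y)
    (x : Z) (hx : ‖x‖ = 1) (ε : ℝ) (hε : 0 < ε) (hε1 : ε ≤ 1)
    (f : Z →L[ℝ] ℝ) (hf : ‖f‖ = 1) (α : ℝ) (hα : 0 < α) (hα1 : α ≤ 1) :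
    ∃ y ∈ sliceSet Z f α, 2 - ε ≤ ‖x - y‖ := by
  set δ := min (ε/8) (α/2) with hδdef
  have hδ : 0 < δ := lt_min (by linarith) (by linarith)
  have hδε : δ ≤ ε/8 := min_le_left _ _
  have hδα : δ ≤ α/2 := min_le_right _ _
  obtain ⟨Y, _, _, _, L, hL, hYD⟩ := h δ hδ
  set a := ‖(L : Z →L[ℝ] Y)‖ with ha
  set b := ‖(L.symm : Y →L[ℝ] Z)‖ with hb
  have hxL : (1:ℝ) ≤ b * ‖L x‖ := by
    have h1 : ‖(L.symm : Y →L[ℝ] Z) (L x)‖ ≤ b * ‖L x‖ :=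
      (L.symm : Y →L[ℝ] Z).le_opNorm _
    simpa [hx] using h1
  have hLx_pos : 0 < ‖L x‖ := by
    rcases lt_or_ge 0 (‖L x‖) with h' | h'
    · exact h'
    · nlinarith [norm_nonneg ((L.symm : Y →L[ℝ] Z)), norm_nonneg (L x)]
  have hb_pos : 0 < b := by nlinarith [norm_nonneg (L x)]
  have hLxa : ‖L x‖ ≤ a := by
    have := (L : Z →L[ℝ] Y).le_opNorm x
    simpa [hx] using this
  have ha_pos : 0 < a := lt_of_lt_of_le hLx_pos hLxa
  have hab1 : (1:ℝ) ≤ a * b := by nlinarith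
  -- the normalized image point
  set Mx : Y := b • L x with hMxdef
  have hMxnorm : ‖Mx‖ = b * ‖L x‖ := by
    rw [hMxdef, norm_smul, Real.norm_eq_abs, abs_of_pos hb_pos]
  have hMx1 : 1 ≤ ‖Mx‖ := by rw [hMxnorm]; exact hxL
  have hMxub : ‖Mx‖ ≤ a * b := by rw [hMxnorm]; nlinarith
  have hMx_pos : 0 < ‖Mx‖ := by linarith
  set yhat : Y := ‖Mx‖⁻¹ • Mx with hyhatdef
  have hyhat : ‖yhat‖ = 1 := by
    rw [hyhatdef, norm_smul, Real.norm_eq_abs, abs_of_pos (inv_pos.mpr hMx_pos)]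
    field_simp
  -- the functional on Y
  set g : Y →L[ℝ] ℝ := f.comp (L.symm : Y →L[ℝ] Z) with hgdef
  have hg_le : ‖g‖ ≤ b := by
    have := ContinuousLinearMap.opNorm_comp_le f (L.symm : Y →L[ℝ] Z)
    simpa [hf] using this
  have hg_ge : (1:ℝ) ≤ ‖g‖ * a := by
    have hfg : f = g.comp (L : Z →L[ℝ] Y) := by
      ext z; simp [hgdef]
    have := ContinuousLinearMap.opNorm_comp_le g (L : Z →L[ℝ] Y)
    rw [← hfg, hf] at this
    linarith [this]
  have hg_pos : 0 < ‖g‖ := by nlinarith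
  set ghat : Y →L[ℝ] ℝ := ‖g‖⁻¹ • g with hghatdef
  have hghat : ‖ghat‖ = 1 := by
    have h1 : ‖ghat‖ = ‖(‖g‖⁻¹)‖ * ‖g‖ := norm_smul (β := Y →L[ℝ] ℝ) _ _
    rw [h1, Real.norm_eq_abs, abs_of_pos (inv_pos.mpr hg_pos), inv_mul_cancel₀ hg_pos.ne']
  -- apply the Daugavet property of Y
  have hslice : IsSlice Y (sliceSet Y ghat (α/2)) := ⟨ghat, hghat, α/2, by linarith, rfl⟩
  obtain ⟨u, hu, hdu⟩ := hYD yhat hyhat (ε/4) (by linarith) (sliceSet Y ghat (α/2)) hslice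
  obtain ⟨hu1, hu2⟩ := hu
  have hu1' : ‖u‖ ≤ 1 := by simpa using hu1
  have hghatu : ghat u = ‖g‖⁻¹ * g u := by simp [hghatdef]
  -- the witness
  set y : Z := b⁻¹ • (L.symm u) with hydef
  have hLsu : ‖(L.symm) u‖ ≤ b * ‖u‖ := (L.symm : Y →L[ℝ] Z).le_opNorm u
  have hy1 : ‖y‖ ≤ 1 := by
    rw [hydef, norm_smul, Real.norm_eq_abs, abs_of_pos (inv_pos.mpr hb_pos)]
    rw [inv_mul_le_iff₀ hb_pos]
    nlinarith
  have hfy : f y = b⁻¹ * g u := by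
    rw [hydef]; simp [hgdef]
  -- membership in the slice
  have hmem : y ∈ sliceSet Z f α := by
    refine ⟨by simpa using hy1, ?_⟩
    rw [hfy]
    have hgu : g u = ‖g‖ * ghat u := by
      rw [hghatu]; field_simp
    rw [hgu]
    -- t := b⁻¹ * ‖g‖ satisfies t * (a*b) = ‖g‖ * a ≥ 1, a*b < 1+δ
    have ht : (0:ℝ) < b⁻¹ * ‖g‖ := by positivity
    have htab : (b⁻¹ * ‖g‖) * (a * b) = ‖g‖ * a := by field_simp
    have h5 : 1 < (b⁻¹ * ‖g‖) * (1 + δ) := by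
      calc (1:ℝ) ≤ ‖g‖ * a := hg_ge
      _ = (b⁻¹ * ‖g‖) * (a * b) := htab.symm
      _ < (b⁻¹ * ‖g‖) * (1 + δ) := by
          exact mul_lt_mul_of_pos_left hL ht
    have hgu2 : 1 - α/2 < ghat u := hu2
    nlinarith [mul_pos ht (by linarith : (0:ℝ) < ghat u - (1 - α/2))]
  refine ⟨y, hmem, ?_⟩
  -- distance estimate
  have hLy : L y = b⁻¹ • u := by
    rw [hydef]; simp
  have hMxu : Mx - u = b • (L x - L y) := by
    rw [hLy, smul_sub, smul_inv_smul₀ hb_pos.ne']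
  have hMxu_norm : ‖Mx - u‖ = b * ‖L x - L y‖ := by
    rw [hMxu, norm_smul, Real.norm_eq_abs, abs_of_pos hb_pos]
  have hLxy : ‖L x - L y‖ ≤ a * ‖x - y‖ := by
    have := (L : Z →L[ℝ] Y).le_opNorm (x - y)
    simpa using this
  have hMxyhat : ‖Mx - yhat‖ = ‖Mx‖ - 1 := by
    have h1 : Mx - yhat = (1 - ‖Mx‖⁻¹) • Mx := by
      rw [hyhatdef, sub_smul, one_smul]
    rw [h1, norm_smul, Real.norm_eq_abs]
    rw [abs_of_nonneg (by
      have : ‖Mx‖⁻¹ ≤ 1 := by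
        rw [inv_le_one_iff₀]; right; exact hMx1
      linarith)]
    field_simp
  have htri : ‖yhat - u‖ ≤ ‖Mx - yhat‖ + ‖Mx - u‖ := by
    have h1 : yhat - u = -(Mx - yhat) + (Mx - u) := by abel
    calc ‖yhat - u‖ = ‖-(Mx - yhat) + (Mx - u)‖ := by rw [h1]
    _ ≤ ‖-(Mx - yhat)‖ + ‖Mx - u‖ := norm_add_le _ _
    _ = ‖Mx - yhat‖ + ‖Mx - u‖ := by rw [norm_neg]
  clear_value Mx yhat g ghat y δ a b
  have hkey : 2 - ε/4 - δ ≤ b * (a * ‖x - y‖) := by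
    have h1 : 2 - ε/4 ≤ ‖yhat - u‖ := hdu
    have h2 : ‖Mx‖ - 1 < δ := by linarith
    have h3 : b * ‖L x - L y‖ ≤ b * (a * ‖x - y‖) :=
      mul_le_mul_of_nonneg_left hLxy hb_pos.le
    linarith
  have hnn : (0:ℝ) ≤ ‖x - y‖ := norm_nonneg _
  have h6 : b * (a * ‖x - y‖) ≤ (1 + δ) * ‖x - y‖ := by
    have := mul_le_mul_of_nonneg_right hL.le hnn
    nlinarith
  have h7 : 2 - ε/4 - δ ≤ (1 + δ) * ‖x - y‖ := le_trans hkey h6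
  nlinarith [mul_nonneg hδ.le hε.le, mul_nonneg hδ.le hnn]


theorem stmt_18 (X : Type*) [NormedAddCommGroup X] [NormedSpace ℝ X] [CompleteSpace X]
    [Nontrivial X]
    (h : ∀ δ > (0 : ℝ), ∃ (Y : Type u) (_ : NormedAddCommGroup Y) (_ : NormedSpace ℝ Y)
      (_ : CompleteSpace Y) (L : X ≃L[ℝ] Y),
        ‖(L : X →L[ℝ] Y)‖ * ‖(L.symm : Y →L[ℝ] X)‖ < 1 + δ ∧ DaugavetProperty Y) :
    DaugavetProperty X := by
  intro x hx ε hε S hS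
  obtain ⟨f, hf, α, hα, rfl⟩ := hS
  obtain ⟨y, hy, hd⟩ := key_18 h x hx (min ε 1) (lt_min hε one_pos) (min_le_right _ _)
    f hf (min α 1) (lt_min hα one_pos) (min_le_right _ _)
  obtain ⟨hy1, hy2⟩ := hy
  exact ⟨y, ⟨hy1, by linarith [min_le_left α 1]⟩, by linarith [min_le_left ε 1]⟩
end
end

section
/- There exists a real Banach space X with the r-big slice property (that is, every slice of B_X has radius one) together with a functional φ ∈ X* of norm one such that inf_{α>0} diam(S(B_X,φ,α)) ≤ √2. In particular, the r-big slice property does not imply that every slice of the unit ball has diameter two. -/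
open Metric Set

noncomputable section

variable (X : Type*) [NormedAddCommGroup X] [NormedSpace ℝ X]

/-- The radius of a set `C`: the infimum of all `r > 0` such that `C` is contained in a closed
ball of radius `r`. -/
def radiusSet (C : Set X) : ℝ :=
  sInf {r : ℝ | 0 < r ∧ ∃ x : X, C ⊆ closedBall x r}


/-!
Realise `c` as `C(ℕ∞, ℝ)` and renorm it by `‖x‖ = ‖x‖∞ + |x ∞|`. All signed sums of the unit
vectors `eₙ` lie in the unit ball, so every functional tends to `0` along them. Given a slice
`{f > 1 - α}` and a centre `z`, take `x` deep in the slice and overwrite a far coordinate `n`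
(where `f eₙ` is negligible and `z n ≈ z ∞`) by `±(1 - |x ∞|)`, with sign opposite to that of `z n`:
the new point stays in the slice and lies at distance almost `1` from `z`, so every slice has
radius one. For `φ = 2 x(∞)`, a point of the slice `{φ > 1 - α}` has `‖x‖∞ ≤ 1 - x ∞ < (1 + α) / 2`,
so this slice has diameter at most `1 + α`.
-/

open Filter Topology
open scoped OnePoint

lemma radiusSet_eq_one {E : Type*} [NormedAddCommGroup E] {C : Set E} (hC : C ⊆ closedBall 0 1)
    (h : ∀ z r, C ⊆ closedBall z r → 1 ≤ r) : radiusSet E C = 1 :=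
  le_antisymm (csInf_le ⟨0, fun _ hr => hr.1.le⟩ ⟨one_pos, 0, hC⟩)
    (le_csInf ⟨1, one_pos, 0, hC⟩ fun r ⟨_, z, hz⟩ => h z r hz)

section Slices

variable {E : Type*} [NormedAddCommGroup E] [NormedSpace ℝ E]

lemma sliceSet_subset_closedBall (f : E →L[ℝ] ℝ) (α : ℝ) : sliceSet E f α ⊆ closedBall 0 1 :=
  sep_subset _ _

lemma sliceSet_nonempty {f : E →L[ℝ] ℝ} (hf : ‖f‖ = 1) {α : ℝ} (hα : 0 < α) :
    (sliceSet E f α).Nonempty := by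
  obtain ⟨x, hx, hfx⟩ := f.exists_lt_apply_of_lt_opNorm (r := 1 - α) (by linarith)
  rw [Real.norm_eq_abs, lt_abs] at hfx
  rcases hfx with hfx | hfx
  · exact ⟨x, mem_closedBall_zero_iff.2 hx.le, hfx⟩
  · exact ⟨-x, mem_closedBall_zero_iff.2 (by rw [norm_neg]; exact hx.le), by rwa [map_neg]⟩

lemma tendsto_apply_atTop_zero_of_norm_sum_smul_le {e : ℕ → E} {C : ℝ}
    (he : ∀ (F : Finset ℕ) (s : ℕ → ℝ), (∀ n, |s n| ≤ 1) → ‖∑ n ∈ F, s n • e n‖ ≤ C)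
    (f : E →L[ℝ] ℝ) : Tendsto (fun n => f (e n)) atTop (𝓝 0) := by
  have hsum : Summable fun n => |f (e n)| := by
    refine summable_of_sum_le (c := ‖f‖ * C) (fun _ => abs_nonneg _) fun F => ?_
    calc ∑ n ∈ F, |f (e n)| = f (∑ n ∈ F, (SignType.sign (f (e n)) : ℝ) • e n) := by
          simp [map_sum, sign_mul_self]
      _ ≤ ‖f‖ * ‖∑ n ∈ F, (SignType.sign (f (e n)) : ℝ) • e n‖ :=
          (le_abs_self _).trans (f.le_opNorm _)
      _ ≤ ‖f‖ * C := by
          gcongr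
          exact he F _ fun n => by rcases SignType.sign (f (e n)) with _ | _ | _ <;> simp
  rw [tendsto_zero_iff_abs_tendsto_zero]
  exact hsum.tendsto_atTop_zero

end Slices

/-- The space `c` of convergent real sequences, realised as `C(ℕ∞, ℝ)` and renormed by
`‖x‖ = ‖x‖∞ + |x ∞|`; the sup-norm is reached through `toC`. -/
def RenormedC : Type := C(OnePoint ℕ, ℝ)

namespace RenormedC

instance : AddCommGroup RenormedC := inferInstanceAs (AddCommGroup C(OnePoint ℕ, ℝ))
instance : Module ℝ RenormedC := inferInstanceAs (Module ℝ C(OnePoint ℕ, ℝ))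

def toC : RenormedC ≃ₗ[ℝ] C(OnePoint ℕ, ℝ) := LinearEquiv.refl ℝ _

def toL1 : RenormedC →ₗ[ℝ] WithLp 1 (C(OnePoint ℕ, ℝ) × ℝ) :=
  (WithLp.linearEquiv 1 ℝ _).symm.toLinearMap ∘ₗ
    (LinearMap.id.prod (ContinuousMap.evalCLM ℝ ∞).toLinearMap) ∘ₗ toC.toLinearMap

lemma toL1_injective : Function.Injective toL1 := fun x y h => by
  simpa [toL1] using congrArg (fun p => p.fst) h

instance : NormedAddCommGroup RenormedC := NormedAddCommGroup.induced _ _ toL1 toL1_injective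
instance : NormedSpace ℝ RenormedC := NormedSpace.induced ℝ _ _ toL1

lemma norm_def (x : RenormedC) : ‖x‖ = ‖toC x‖ + |toC x ∞| := by
  change ‖toL1 x‖ = _
  simp [WithLp.prod_norm_eq_of_L1, toL1]

lemma isometry_toL1 : Isometry toL1 := AddMonoidHomClass.isometry_of_norm toL1 fun _ => rfl

instance : CompleteSpace RenormedC := by
  rw [completeSpace_iff_isComplete_range isometry_toL1.isUniformInducing]
  apply IsClosed.isComplete
  have : range toL1 = {p | p.snd = p.fst ∞} := by
    ext p
    constructor
    · rintro ⟨x, rfl⟩; simp [toL1]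
    · intro hp
      exact ⟨toC.symm p.fst, WithLp.ofLp_injective 1 (Prod.ext rfl hp.symm)⟩
  rw [this]
  exact isClosed_eq (WithLp.continuous_snd ..)
    ((continuous_eval_const ∞).comp (WithLp.continuous_fst ..))

instance : Nontrivial RenormedC := inferInstanceAs (Nontrivial C(OnePoint ℕ, ℝ))

lemma isClopen_singleton_coe (n : ℕ) : IsClopen {(n : OnePoint ℕ)} :=
  ⟨isClosed_singleton, by
    rw [← image_singleton]
    exact OnePoint.isOpen_image_coe.2 (isOpen_discrete _)⟩

def single (n : ℕ) : RenormedC :=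
  toC.symm ⟨indicator {(n : OnePoint ℕ)} 1,
    (isClopen_singleton_coe n).continuous_indicator continuous_const⟩

lemma toC_single_coe (n m : ℕ) : toC (single n) m = if m = n then 1 else 0 := by
  by_cases h : m = n <;> simp [single, h]

lemma toC_single_infty (n : ℕ) : toC (single n) ∞ = 0 := by
  simp [single]

lemma norm_sum_smul_single_le (F : Finset ℕ) (s : ℕ → ℝ) (hs : ∀ n, |s n| ≤ 1) :
    ‖∑ n ∈ F, s n • single n‖ ≤ 1 := by
  have hval (p : OnePoint ℕ) :
      toC (∑ n ∈ F, s n • single n) p = ∑ n ∈ F, s n * toC (single n) p := by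
    simp [map_sum]
  have hinfty : toC (∑ n ∈ F, s n • single n) ∞ = 0 := by simp [toC_single_infty]
  rw [norm_def, hinfty, abs_zero, add_zero]
  refine (ContinuousMap.norm_le _ zero_le_one).2 fun p => ?_
  induction p using OnePoint.rec with
  | infty => rw [hinfty, norm_zero]; exact zero_le_one
  | coe m =>
    rw [Real.norm_eq_abs, hval]
    simp only [toC_single_coe, mul_ite, mul_one, mul_zero, Finset.sum_ite_eq]
    split_ifs
    · exact hs m
    · simp

lemma tendsto_apply_single (f : RenormedC →L[ℝ] ℝ) :
    Tendsto (fun n => f (single n)) atTop (𝓝 0) :=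
  tendsto_apply_atTop_zero_of_norm_sum_smul_le norm_sum_smul_single_le f

lemma tendsto_toC_coe (x : RenormedC) :
    Tendsto (fun n : ℕ => toC x n) atTop (𝓝 (toC x ∞)) := by
  have := OnePoint.continuousAt_infty'.1 (toC x).continuous.continuousAt
  rwa [coclosedCompact_eq_cocompact, cocompact_eq_atTop] at this

lemma exists_smul_single_far (x z : RenormedC) (hx : ‖x‖ ≤ 1) (n : ℕ) :
    ∃ c : ℝ, |c| ≤ 2 ∧ ‖x + c • single n‖ ≤ 1 ∧
      1 - |toC z n - toC z ∞| ≤ ‖x + c • single n - z‖ := by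
  set w := toC x
  set t := w ∞
  set m := toC z
  have hw : ‖w‖ + |t| ≤ 1 := norm_def x ▸ hx
  have hwp (p : OnePoint ℕ) : |w p| ≤ ‖w‖ := by
    simpa [Real.norm_eq_abs] using w.norm_coe_le_norm p
  have ht : 0 ≤ 1 - |t| := by linarith [norm_nonneg w]
  -- the largest value the ball allows at `n`, with sign opposite to that of `z n`
  obtain ⟨v, hv, hvm⟩ : ∃ v : ℝ, |v| = 1 - |t| ∧ |v - m n| = 1 - |t| + |m n| := by
    rcases le_or_gt 0 (m n) with h | h
    · refine ⟨-(1 - |t|), by rw [abs_neg, abs_of_nonneg ht], ?_⟩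
      rw [abs_of_nonpos (by linarith), abs_of_nonneg h]; ring
    · refine ⟨1 - |t|, abs_of_nonneg ht, ?_⟩
      rw [abs_of_pos (by linarith), abs_of_neg h]; ring
  set x' := x + (v - w n) • single n
  have hx'_infty : toC x' ∞ = t := by simp [x', toC_single_infty, t, w]
  have hx'_coe (k : ℕ) : toC x' k = if k = n then v else w k := by
    by_cases h : k = n
    · subst h; simp [x', toC_single_coe, w]
    · simp [x', toC_single_coe, h, w]
  refine ⟨v - w n, ?_, ?_, ?_⟩
  · linarith [abs_sub v (w n), hwp n, abs_nonneg t]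
  · have : ‖toC x'‖ ≤ 1 - |t| := by
      refine (ContinuousMap.norm_le _ ht).2 fun p => ?_
      rw [Real.norm_eq_abs]
      induction p using OnePoint.rec with
      | infty => rw [hx'_infty]; linarith [hwp ∞]
      | coe k =>
        rw [hx'_coe]
        split_ifs
        · exact hv.le
        · linarith [hwp k]
    rw [norm_def, hx'_infty]
    linarith
  · have h1 : |v - m n| ≤ ‖toC x' - m‖ := by
      simpa [hx'_coe, Real.norm_eq_abs] using (toC x' - m).norm_coe_le_norm n
    have h2 := abs_sub_abs_le_abs_sub t (m ∞)
    have h3 := abs_sub_abs_le_abs_sub (m ∞) (m n)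
    rw [abs_sub_comm] at h3
    rw [norm_def, map_sub, ContinuousMap.sub_apply, hx'_infty]
    linarith

lemma one_le_of_sliceSet_subset_closedBall {f : RenormedC →L[ℝ] ℝ} (hf : ‖f‖ = 1) {α : ℝ}
    (hα : 0 < α) {z : RenormedC} {r : ℝ} (h : sliceSet RenormedC f α ⊆ closedBall z r) :
    1 ≤ r := by
  obtain ⟨x, hx, hfx⟩ := sliceSet_nonempty hf (half_pos hα)
  refine le_of_forall_sub_le fun ε hε => ?_
  obtain ⟨n, hfn, hzn⟩ := (((tendsto_apply_single f).eventually (eventually_abs_sub_lt 0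
    (by positivity : 0 < α / 4))).and ((tendsto_toC_coe z).eventually
    (eventually_abs_sub_lt _ hε))).exists
  obtain ⟨c, hc, hx'1, hx'z⟩ := exists_smul_single_far x z (mem_closedBall_zero_iff.1 hx) n
  have hcf : |c * f (single n)| ≤ 2 * (α / 4) := by
    rw [abs_mul, ← sub_zero (f (single n))]
    exact mul_le_mul hc hfn.le (abs_nonneg _) zero_le_two
  have hx' : x + c • single n ∈ sliceSet RenormedC f α := by
    refine ⟨mem_closedBall_zero_iff.2 hx'1, ?_⟩
    rw [map_add, map_smul, smul_eq_mul]
    linarith [neg_abs_le (c * f (single n))]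
  have := h hx'
  rw [mem_closedBall, dist_eq_norm] at this
  linarith

def twiceLim : RenormedC →L[ℝ] ℝ :=
  LinearMap.mkContinuous
    ((2 : ℝ) • (ContinuousMap.evalCLM ℝ ∞).toLinearMap ∘ₗ toC.toLinearMap) 1
    fun x => by
      have := (toC x).norm_coe_le_norm ∞
      simp only [Real.norm_eq_abs] at this
      simp [norm_def]
      linarith

lemma twiceLim_apply (x : RenormedC) : twiceLim x = 2 * toC x ∞ := rfl

lemma norm_twiceLim : ‖twiceLim‖ = 1 := by
  refine le_antisymm (LinearMap.mkContinuous_norm_le _ zero_le_one _) ?_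
  set h : RenormedC := toC.symm (ContinuousMap.const _ (1 / 2))
  have hh : ‖h‖ ≤ 1 := by
    have : ‖ContinuousMap.const (OnePoint ℕ) (1 / 2 : ℝ)‖ ≤ 1 / 2 :=
      (ContinuousMap.norm_le _ (by norm_num)).2 fun _ => by norm_num
    rw [norm_def]
    simp only [h, LinearEquiv.apply_symm_apply, ContinuousMap.const_apply]
    rw [abs_of_pos (by norm_num)]
    linarith
  calc (1 : ℝ) = ‖twiceLim h‖ := by simp [twiceLim_apply, h]
    _ ≤ ‖twiceLim‖ * ‖h‖ := twiceLim.le_opNorm h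
    _ ≤ ‖twiceLim‖ := mul_le_of_le_one_right (norm_nonneg _) hh

lemma diam_sliceSet_twiceLim_le {α : ℝ} (hα : 0 ≤ α) :
    diam (sliceSet RenormedC twiceLim α) ≤ 1 + α := by
  have key {p : RenormedC} (hp : p ∈ sliceSet RenormedC twiceLim α) :
      ‖toC p‖ ≤ 1 - toC p ∞ ∧ 1 - α < 2 * toC p ∞ := by
    obtain ⟨hp1, hp2⟩ := hp
    rw [mem_closedBall_zero_iff, norm_def] at hp1
    exact ⟨by linarith [le_abs_self (toC p ∞)], hp2⟩
  refine diam_le_of_forall_dist_le (by linarith) fun p hp q hq => ?_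
  obtain ⟨hp1, hp2⟩ := key hp
  obtain ⟨hq1, hq2⟩ := key hq
  have := norm_sub_le (toC p) (toC q)
  rw [dist_eq_norm, norm_def, map_sub, ContinuousMap.sub_apply]
  rcases abs_cases (toC p ∞ - toC q ∞) with ⟨h, _⟩ | ⟨h, _⟩ <;> linarith

end RenormedC

open RenormedC

theorem stmt_19 :
    ∃ (X : Type) (_ : NormedAddCommGroup X) (_ : NormedSpace ℝ X) (_ : CompleteSpace X)
      (_ : Nontrivial X),
      -- `X` has the `r`-big slice property: every slice of `B_X` has radius one
      (∀ S : Set X, IsSlice X S → radiusSet X S = 1) ∧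
      (∃ φ : X →L[ℝ] ℝ, ‖φ‖ = 1 ∧
        sInf {d : ℝ | ∃ α > (0 : ℝ), d = Metric.diam (sliceSet X φ α)} ≤ Real.sqrt 2) ∧
      -- in particular, not every slice of the unit ball of `X` has diameter two
      ¬ ∀ S : Set X, IsSlice X S → Metric.diam S = 2 := by
  have hα : (0 : ℝ) < √2 - 1 := by
    have : (1 : ℝ) < √2 := by rw [Real.lt_sqrt zero_le_one]; norm_num
    linarith
  have hdiam : diam (sliceSet RenormedC twiceLim (√2 - 1)) ≤ √2 := by
    simpa using diam_sliceSet_twiceLim_le hα.le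
  refine ⟨RenormedC, inferInstance, inferInstance, inferInstance, inferInstance, ?_,
    ⟨twiceLim, norm_twiceLim, ?_⟩, fun h => ?_⟩
  · rintro S ⟨f, hf, α, hα, rfl⟩
    exact radiusSet_eq_one (sliceSet_subset_closedBall f α) fun z r hz =>
      one_le_of_sliceSet_subset_closedBall hf hα hz
  · refine le_trans (csInf_le ⟨0, ?_⟩ ⟨√2 - 1, hα, rfl⟩) hdiam
    rintro _ ⟨α, -, rfl⟩
    exact diam_nonneg
  · have h2 := h _ ⟨twiceLim, norm_twiceLim, √2 - 1, hα, rfl⟩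
    have : √2 < 2 := by rw [Real.sqrt_lt' two_pos]; norm_num
    linarith
end
end
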